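/- arXiv:2205.11363 — 3 statements merged into one kernel-verified Lean document; each statement's English description precedes it below -/
import Mathlib

section
/- Let y : Fin k → ℝ be nondecreasing with 0 ≤ y 0, let δ : Fin k → ℝ be nonnegative. Then ∏_{i<k} (y i + δ i) ≥ (∏_{i<k-1} y i) · (y (k-1) + ∑_{i<k} δ i). -/
open Finset

theorem Finset.prod_mul_add_sum_le_prod_add_mul {ι R : Type*} [DecidableEq ι] [CommSemiring R]
    [PartialOrder R] [IsOrderedRing R] (s : Finset ι) (a c : ι → R)
    (ha : ∀ i ∈ s, 0 ≤ a i) (hc : ∀ i ∈ s, 0 ≤ c i) (b : R) (hab : ∀ i ∈ s, a i ≤ b) :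
    (∏ i ∈ s, a i) * (b + ∑ i ∈ s, c i) ≤ (∏ i ∈ s, (a i + c i)) * b := by
  induction s using Finset.induction_on generalizing b with
  | empty => simp
  | @insert j s hj ih =>
    simp only [mem_insert, forall_eq_or_imp] at ha hc hab
    have hP : 0 ≤ ∏ i ∈ s, (a i + c i) := prod_nonneg fun i hi => add_nonneg (ha.2 i hi) (hc.2 i hi)
    -- `c j` is shifted onto `b`, which stays an upper bound for the remaining factors
    have ih' := ih ha.2 hc.2 (b + c j) fun i hi => (hab.2 i hi).trans (le_add_of_nonneg_right hc.1)
    have h_exchange : a j * (b + c j) ≤ (a j + c j) * b := by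
      rw [mul_add, add_mul, mul_comm (a j) (c j)]
      gcongr
      exacts [hc.1, hab.1]
    rw [prod_insert hj, prod_insert hj, sum_insert hj]
    calc a j * (∏ i ∈ s, a i) * (b + (c j + ∑ i ∈ s, c i))
        = a j * ((∏ i ∈ s, a i) * (b + c j + ∑ i ∈ s, c i)) := by rw [add_assoc, mul_assoc]
      _ ≤ a j * ((∏ i ∈ s, (a i + c i)) * (b + c j)) := mul_le_mul_of_nonneg_left ih' ha.1
      _ = (∏ i ∈ s, (a i + c i)) * (a j * (b + c j)) := by ring
      _ ≤ (∏ i ∈ s, (a i + c i)) * ((a j + c j) * b) := mul_le_mul_of_nonneg_left h_exchange hP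
      _ = (a j + c j) * (∏ i ∈ s, (a i + c i)) * b := by ring

theorem stmt2 (m : ℕ) (y δ : Fin (m + 1) → ℝ) (hy : Monotone y) (hy0 : 0 ≤ y 0)
    (hδ : ∀ i, 0 ≤ δ i) :
    ∏ i, (y i + δ i) ≥
      (∏ i ∈ Finset.univ.erase (Fin.last m), y i) * (y (Fin.last m) + ∑ i, δ i) := by
  set s := univ.erase (Fin.last m)
  have key := s.prod_mul_add_sum_le_prod_add_mul y δ (fun i _ => hy0.trans (hy (Fin.zero_le i)))
    (fun i _ => hδ i) (y (Fin.last m) + δ (Fin.last m))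
    (fun i _ => (hy (Fin.le_last i)).trans (le_add_of_nonneg_right (hδ _)))
  rw [← sum_erase_add _ _ (mem_univ (Fin.last m)), ← prod_erase_mul _ _ (mem_univ (Fin.last m))]
  calc (∏ i ∈ s, y i) * (y (Fin.last m) + (∑ i ∈ s, δ i + δ (Fin.last m)))
      = (∏ i ∈ s, y i) * (y (Fin.last m) + δ (Fin.last m) + ∑ i ∈ s, δ i) := by ring
    _ ≤ _ := key
end

section
/- Let y : Fin k → ℝ be nondecreasing, let γ : Fin k → ℝ be nonnegative, and suppose y 0 ≥ ∑_{i<k} γ i. Then ∏_{i<k} (y i - γ i) ≥ (y 0 - ∑_{i<k} γ i) · ∏_{1≤i<k} y i. -/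
/-!
Moving a decrement `v` from a larger factor `b` onto a smaller factor `a` can only lower the
product, since `(a - v) * b ≤ a * (b - v)` amounts to `v * a ≤ v * b`. Shifting the decrements one
at a time onto the smallest number `y 0` gives the inequality.
-/

section

variable {R : Type*} [CommRing R] [LinearOrder R] [IsStrictOrderedRing R]

theorem sub_mul_le_mul_sub {a b v : R} (hab : a ≤ b) (hv : 0 ≤ v) :
    (a - v) * b ≤ a * (b - v) := by
  nlinarith [mul_le_mul_of_nonneg_left hab hv]

theorem sub_sum_mul_prod_le_mul_prod_sub {ι : Type*} [DecidableEq ι] (s : Finset ι)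
    (y γ : ι → R) (a : R) (hγ : ∀ i ∈ s, 0 ≤ γ i) (hy : ∀ i ∈ s, a ≤ y i)
    (ha : ∑ i ∈ s, γ i ≤ a) :
    (a - ∑ i ∈ s, γ i) * ∏ i ∈ s, y i ≤ a * ∏ i ∈ s, (y i - γ i) := by
  induction s using Finset.induction_on generalizing a with
  | empty => simp
  | insert j s hj ih =>
    rw [Finset.sum_insert hj] at ha ⊢
    rw [Finset.prod_insert hj, Finset.prod_insert hj]
    have hγs : ∀ i ∈ s, 0 ≤ γ i := fun i hi => hγ i (Finset.mem_insert_of_mem hi)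
    have hγj : 0 ≤ γ j := hγ j (Finset.mem_insert_self j s)
    have hyj : a ≤ y j := hy j (Finset.mem_insert_self j s)
    have hsum : 0 ≤ ∑ i ∈ s, γ i := Finset.sum_nonneg hγs
    have hprod : 0 ≤ ∏ i ∈ s, (y i - γ i) := Finset.prod_nonneg fun i hi => by
      linarith [hy i (Finset.mem_insert_of_mem hi), Finset.single_le_sum hγs hi]
    have hrest := ih (a - γ j) hγs (fun i hi => by linarith [hy i (Finset.mem_insert_of_mem hi)])
      (by linarith)
    calc (a - (γ j + ∑ i ∈ s, γ i)) * (y j * ∏ i ∈ s, y i)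
        = y j * ((a - γ j - ∑ i ∈ s, γ i) * ∏ i ∈ s, y i) := by ring
      _ ≤ y j * ((a - γ j) * ∏ i ∈ s, (y i - γ i)) :=
        mul_le_mul_of_nonneg_left hrest (by linarith)
      _ = ((a - γ j) * y j) * ∏ i ∈ s, (y i - γ i) := by ring
      _ ≤ (a * (y j - γ j)) * ∏ i ∈ s, (y i - γ i) :=
        mul_le_mul_of_nonneg_right (sub_mul_le_mul_sub hyj hγj) hprod
      _ = a * ((y j - γ j) * ∏ i ∈ s, (y i - γ i)) := by ring

end

theorem stmt3 (m : ℕ) (y γ : Fin (m + 1) → ℝ) (hy : Monotone y)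
    (hγ : ∀ i, 0 ≤ γ i) (h0 : y 0 ≥ ∑ i, γ i) :
    ∏ i, (y i - γ i) ≥ (y 0 - ∑ i, γ i) * ∏ i ∈ Finset.univ.erase 0, y i := by
  have hsplit : γ 0 + ∑ i ∈ Finset.univ.erase 0, γ i = ∑ i, γ i :=
    Finset.add_sum_erase _ γ (Finset.mem_univ 0)
  have key := sub_sum_mul_prod_le_mul_prod_sub (Finset.univ.erase 0) y γ (y 0 - γ 0)
    (fun i _ => hγ i) (fun i _ => by linarith [hy (Fin.zero_le i), hγ 0]) (by linarith)
  rw [← Finset.mul_prod_erase _ (fun i => y i - γ i) (Finset.mem_univ 0)]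
  calc (y 0 - ∑ i, γ i) * ∏ i ∈ Finset.univ.erase 0, y i
      = (y 0 - γ 0 - ∑ i ∈ Finset.univ.erase 0, γ i) * ∏ i ∈ Finset.univ.erase 0, y i := by
        rw [← hsplit, sub_add_eq_sub_sub]
    _ ≤ _ := key
end

section
/- Let 0 < α < 1 and let e_max, e_min be positive reals with (1+α)·e_max ≤ e_min. Setting Δ = (e_min - e_max)/2, we have (e_max + Δ)(e_min - Δ) ≥ (1 + α²/16)·e_max·e_min. -/
theorem stmt5 (α emax emin : ℝ) (hα0 : 0 < α) (hα1 : α < 1)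
    (hmax : 0 < emax) (hmin : 0 < emin) (h : (1 + α) * emax ≤ emin) :
    (emax + (emin - emax) / 2) * (emin - (emin - emax) / 2) ≥
      (1 + α ^ 2 / 16) * (emax * emin) := by
  have h1 : α * emax ≤ emin - emax := by nlinarith
  have key : (emin - emax) ^ 2 ≥ α ^ 2 / 4 * (emax * emin) := by
    rcases le_or_gt emin (4 * emax) with h4 | h4
    · have h2 : (α * emax) ^ 2 ≤ (emin - emax) ^ 2 := by
        nlinarith [mul_pos hα0 hmax]
      nlinarith [mul_nonneg (mul_nonneg (sq_nonneg α) hmax.le)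
        (by linarith : (0:ℝ) ≤ 4 * emax - emin)]
    · have hα2 : α ^ 2 < 1 := by nlinarith
      nlinarith [mul_nonneg (mul_nonneg (by linarith : (0:ℝ) ≤ 1 - α ^ 2) hmax.le) hmin.le,
        mul_nonneg (by linarith : (0:ℝ) ≤ emin - 4 * emax) hmin.le,
        mul_pos hmin hmin]
  nlinarith [key]
end
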